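/- If n = 2k+2 for some k ≥ 0, |I| = 2k+2, μ = φ_I(μ') with μ' ∈ 𝔠 (so |∑ ±μ'_j| < 1 for any choice of signs), L is a line subbundle with A ⊆ I the set of parabolic indices lying on L, and 1 − 2 deg L + ∑ ±μ_j < 0 where the signs are + for parabolic directions off L and − for those on L, then 1 − 2 deg L + |I| − 2|A| ≤ −1; equivalently, writing u = deg L + k, one has 2k + 2 ≤ u + |A|. -/
import Mathlib


open Finset

/-- Arithmetic core of the wall-crossing lemma: with |I| = 2k+2, μ' in the chamber 𝔠,
signs ε_i ∈ {±1}, and the strict instability inequality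
1 − 2 deg L + (|I| − 2|A| + ∑ ε_i μ'_i) < 0, the integer part satisfies
1 − 2 deg L + |I| − 2|A| ≤ −1; equivalently 2k+2 ≤ (deg L + k) + |A|. -/
theorem wall_crossing_integer_part (n k : ℕ) (d : ℤ)
    (I A : Finset (Fin n)) (hA : A ⊆ I) (hI : I.card = 2 * k + 2)
    (μ' : Fin n → ℝ) (hμ : ∀ i, 0 < μ' i ∧ μ' i < 1) (hsum : ∑ i, μ' i < 1)
    (ε : Fin n → ℝ) (hε : ∀ i, ε i = 1 ∨ ε i = -1)
    (h : (1 : ℝ) - 2 * d + ((I.card : ℝ) - 2 * A.card + ∑ i, ε i * μ' i) < 0) :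
    (1 - 2 * d + (I.card : ℤ) - 2 * (A.card : ℤ) ≤ -1) ∧
      ((2 * k + 2 : ℤ) ≤ (d + k) + A.card) := by
  have hlow : -(1 : ℝ) < ∑ i, ε i * μ' i := by
    have : -(∑ i, μ' i) ≤ ∑ i, ε i * μ' i := by
      rw [← Finset.sum_neg_distrib]
      apply Finset.sum_le_sum
      intro i _
      rcases hε i with he | he <;> rw [he] <;> nlinarith [(hμ i).1]
    linarith
  have key : (1 - 2 * d + (2 * (k:ℤ) + 2) - 2 * (A.card : ℤ) : ℤ) < 1 := by
    have : ((1 - 2 * d + (2 * (k:ℤ) + 2) - 2 * (A.card : ℤ) : ℤ) : ℝ) < 1 := by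
      rw [hI] at h; push_cast at h ⊢; linarith
    exact_mod_cast this
  rw [hI]; push_cast
  constructor <;> omega
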